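/- Let $(a_n)$ and $(b_n)$ be strictly increasing sequences of positive integers with $L_n = b_n/a_n \to L = p/q$, where $p, q \in \mathbb{N}$ are relatively prime, and set $\delta_n = L_n - L$. Suppose $a_n |\delta_n| \to \infty$. Then for every $m \in \mathbb{Z}$ and every $t > 0$, $\frac{1}{a_n} \sum_{j=1}^{\lfloor a_n t \rfloor} \widehat{f}_{m,L}(j L_n) \to t \int_0^1 f_{m,L}(x)\, dx$ as $n \to \infty$. -/

import Mathlib

/-!
Write `j - 1 = q i + r` with `0 ≤ r < q`. Since `q L = p` is an integer,
`{j L_n} = {(r + 1) L_n + i s_n}` with `s_n = q δ_n`, so the sum splits into `q` sums of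
`f_{m,L}({x})` along arithmetic progressions with `≈ a_n t / q` terms and step `s_n → 0`, whose
total length `≈ (a_n t / q) |s_n|` tends to infinity. Each such sum, multiplied by `|s_n|`, is a
Riemann sum of the `1`-periodic function `f_{m,L}({x})` over an interval of that length, so the
averages tend to `∫_0^1 f_{m,L}`. The jumps of `f_{m,L}({x})` at the integers cost `O(|s_n|)` per
integer crossed, which is negligible.
-/

open Filter MeasureTheory

/-- `f_{m,L}(x) = (|x-m+1|^{1/3} + |x-m-L|^{1/3} - |x-m|^{1/3} - |x-m+1-L|^{1/3})^3`. -/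
noncomputable def fmL (L : ℝ) (m : ℤ) (x : ℝ) : ℝ :=
  (|x - m + 1| ^ ((1 : ℝ) / 3) + |x - m - L| ^ ((1 : ℝ) / 3)
    - |x - m| ^ ((1 : ℝ) / 3) - |x - m + 1 - L| ^ ((1 : ℝ) / 3)) ^ 3

/-- `f̂_{m,L}(x) = f_{m,L}({x})`, where `{x}` is the fractional part of `x`. -/
noncomputable def fmLhat (L : ℝ) (m : ℤ) (x : ℝ) : ℝ := fmL L m (Int.fract x)

open Finset Topology

section PeriodicExtension

variable {g : ℝ → ℝ} {C : ℝ}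

theorem abs_comp_fract_le (hC : ∀ x ∈ Set.Icc (0 : ℝ) 1, |g x| ≤ C) (x : ℝ) :
    |g (Int.fract x)| ≤ C :=
  hC _ ⟨Int.fract_nonneg x, (Int.fract_lt_one x).le⟩

theorem periodic_comp_fract : Function.Periodic (fun x => g (Int.fract x)) 1 := fun x => by
  simp

theorem intervalIntegrable_comp_fract (hg : Measurable g)
    (hC : ∀ x ∈ Set.Icc (0 : ℝ) 1, |g x| ≤ C) (u v : ℝ) :
    IntervalIntegrable (fun x => g (Int.fract x)) volume u v := by
  rw [intervalIntegrable_iff]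
  exact Measure.integrableOn_of_bounded (M := C) measure_Ioc_lt_top.ne
    (hg.comp measurable_fract).aestronglyMeasurable (Eventually.of_forall (abs_comp_fract_le hC))

theorem intervalIntegral_comp_fract_zero_one :
    ∫ x in (0 : ℝ)..1, g (Int.fract x) = ∫ x in (0 : ℝ)..1, g x := by
  refine intervalIntegral.integral_congr_ae ?_
  filter_upwards [compl_mem_ae_iff.2 (measure_singleton (1 : ℝ))] with x hx1 hx
  rw [Set.uIoc_of_le zero_le_one] at hx
  rw [Int.fract_eq_self.2 ⟨hx.1.le, lt_of_le_of_ne hx.2 hx1⟩]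

theorem abs_intervalIntegral_comp_fract_sub_le (hg : Measurable g)
    (hC : ∀ x ∈ Set.Icc (0 : ℝ) 1, |g x| ≤ C) (c T : ℝ) :
    |(∫ x in c..c + T, g (Int.fract x)) - T * ∫ x in (0 : ℝ)..1, g x| ≤ 2 * C := by
  set I := ∫ x in (0 : ℝ)..1, g x
  have hint := intervalIntegrable_comp_fract hg hC
  have hK : ∫ x in c..c + ⌊T⌋, g (Int.fract x) = ⌊T⌋ * I := by
    simpa [periodic_comp_fract.intervalIntegral_add_eq c 0, intervalIntegral_comp_fract_zero_one]
      using periodic_comp_fract.intervalIntegral_add_zsmul_eq ⌊T⌋ c hint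
  have hI : |I| ≤ C := by
    simpa using intervalIntegral.norm_integral_le_of_norm_le_const
      (a := 0) (b := 1) (f := g) fun x hx => hC x (Set.Ioc_subset_Icc_self (by simpa using hx))
  have hrem : |∫ x in c + ⌊T⌋..c + T, g (Int.fract x)| ≤ C * Int.fract T := by
    have := intervalIntegral.norm_integral_le_of_norm_le_const
      (a := c + ⌊T⌋) (b := c + T) (f := fun x => g (Int.fract x))
      fun x _ => abs_comp_fract_le hC x
    rwa [add_sub_add_left_eq_sub, ← Int.fract, abs_of_nonneg (Int.fract_nonneg T)] at this
  rw [← intervalIntegral.integral_add_adjacent_intervals (hint c _) (hint _ _), hK]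
  calc |⌊T⌋ * I + (∫ x in c + ⌊T⌋..c + T, g (Int.fract x)) - T * I|
      = |(∫ x in c + ⌊T⌋..c + T, g (Int.fract x)) - Int.fract T * I| := by
        rw [Int.fract]; ring_nf
    _ ≤ |∫ x in c + ⌊T⌋..c + T, g (Int.fract x)| + |Int.fract T * I| := abs_sub _ _
    _ = |∫ x in c + ⌊T⌋..c + T, g (Int.fract x)| + Int.fract T * |I| := by
        rw [abs_mul, abs_of_nonneg (Int.fract_nonneg T)]
    _ ≤ 2 * C := by nlinarith [Int.fract_nonneg T, Int.fract_lt_one T, abs_nonneg I]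

variable {s ε : ℝ}

-- The second term pays for a jump of `g ∘ Int.fract` at an integer in `[x, x + s]`.
theorem abs_comp_fract_sub_le (hC : ∀ x ∈ Set.Icc (0 : ℝ) 1, |g x| ≤ C)
    (huc : ∀ x ∈ Set.Icc (0 : ℝ) 1, ∀ y ∈ Set.Icc (0 : ℝ) 1, |x - y| ≤ s →
      |g x - g y| ≤ ε)
    {x u : ℝ} (hu : u ∈ Set.Icc x (x + s)) :
    |g (Int.fract u) - g (Int.fract x)| ≤ ε + 2 * C * (⌊x + s⌋ - ⌊x⌋) := by
  have hs : 0 ≤ s := by linarith [hu.1, hu.2]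
  have hε : 0 ≤ ε := by simpa using huc 0 (by simp) 0 (by simp) (by simpa using hs)
  have hC0 : 0 ≤ C := (abs_nonneg _).trans (hC 0 (by simp))
  have hfloor : ⌊x⌋ ≤ ⌊x + s⌋ := Int.floor_le_floor (by linarith)
  rcases hfloor.eq_or_lt with heq | hlt
  · have hu_floor : ⌊u⌋ = ⌊x⌋ :=
      le_antisymm (heq ▸ Int.floor_le_floor hu.2) (Int.floor_le_floor hu.1)
    have hdist : Int.fract u - Int.fract x = u - x := by
      rw [Int.fract, Int.fract, hu_floor]; ring
    rw [heq, sub_self, mul_zero, add_zero]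
    refine huc _ ⟨Int.fract_nonneg u, (Int.fract_lt_one u).le⟩ _
      ⟨Int.fract_nonneg x, (Int.fract_lt_one x).le⟩ ?_
    rw [hdist, abs_of_nonneg (by linarith [hu.1])]
    linarith [hu.2]
  · have h1 : (1 : ℝ) ≤ ⌊x + s⌋ - ⌊x⌋ := by
      rw [← Int.cast_sub, ← Int.cast_one, Int.cast_le]; omega
    calc |g (Int.fract u) - g (Int.fract x)|
        ≤ |g (Int.fract u)| + |g (Int.fract x)| := abs_sub _ _
      _ ≤ 2 * C := by linarith [abs_comp_fract_le hC u, abs_comp_fract_le hC x]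
      _ ≤ ε + 2 * C * (⌊x + s⌋ - ⌊x⌋) := by nlinarith

theorem abs_mul_comp_fract_sub_intervalIntegral_le (hg : Measurable g)
    (hC : ∀ x ∈ Set.Icc (0 : ℝ) 1, |g x| ≤ C)
    (huc : ∀ x ∈ Set.Icc (0 : ℝ) 1, ∀ y ∈ Set.Icc (0 : ℝ) 1, |x - y| ≤ s →
      |g x - g y| ≤ ε)
    (hs : 0 ≤ s) (x : ℝ) :
    |s * g (Int.fract x) - ∫ u in x..x + s, g (Int.fract u)|
      ≤ (ε + 2 * C * (⌊x + s⌋ - ⌊x⌋)) * s := by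
  have hconst : s * g (Int.fract x) = ∫ _ in x..x + s, g (Int.fract x) := by simp
  rw [hconst, ← intervalIntegral.integral_sub intervalIntegrable_const
    (intervalIntegrable_comp_fract hg hC _ _), ← abs_neg, ← intervalIntegral.integral_neg]
  have := intervalIntegral.norm_integral_le_of_norm_le_const (a := x) (b := x + s)
    (f := fun u => -(g (Int.fract x) - g (Int.fract u))) fun u hu => by
      rw [Set.uIoc_of_le (by linarith)] at hu
      simpa using abs_comp_fract_sub_le hC huc (Set.Ioc_subset_Icc_self hu)
  simpa [abs_of_nonneg hs] using this

theorem abs_mul_sum_comp_fract_sub_intervalIntegral_le (hg : Measurable g)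
    (hC : ∀ x ∈ Set.Icc (0 : ℝ) 1, |g x| ≤ C)
    (huc : ∀ x ∈ Set.Icc (0 : ℝ) 1, ∀ y ∈ Set.Icc (0 : ℝ) 1, |x - y| ≤ s →
      |g x - g y| ≤ ε)
    (hs : 0 ≤ s) (c : ℝ) (M : ℕ) :
    |s * ∑ i ∈ range M, g (Int.fract (c + i * s)) - ∫ u in c..c + M * s, g (Int.fract u)|
      ≤ ε * (M * s) + 2 * C * s * (M * s + 1) := by
  set x : ℕ → ℝ := fun i => c + i * s
  have hx_succ : ∀ i, x (i + 1) = x i + s := fun i => by simp only [x]; push_cast; ring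
  have hC0 : 0 ≤ C := (abs_nonneg _).trans (hC 0 (by simp))
  have hsteps : ∑ i ∈ range M, (∫ u in x i..x (i + 1), g (Int.fract u)) =
      ∫ u in c..c + M * s, g (Int.fract u) := by
    rw [intervalIntegral.sum_integral_adjacent_intervals fun i _ =>
      intervalIntegrable_comp_fract hg hC _ _]
    simp [x]
  have hfloors : (⌊x M⌋ : ℝ) - ⌊x 0⌋ ≤ M * s + 1 := by
    linarith [Int.floor_le (x M), Int.sub_one_lt_floor (x 0), show x M - x 0 = M * s by simp [x]]
  calc
    _ = |∑ i ∈ range M,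
          (s * g (Int.fract (x i)) - ∫ u in x i..x i + s, g (Int.fract u))| := by
        simp only [← hsteps, mul_sum, ← sum_sub_distrib, hx_succ, x]
    _ ≤ ∑ i ∈ range M, (ε + 2 * C * (⌊x i + s⌋ - ⌊x i⌋)) * s :=
        (abs_sum_le_sum_abs _ _).trans <| sum_le_sum fun i _ =>
          abs_mul_comp_fract_sub_intervalIntegral_le hg hC huc hs (x i)
    _ = ε * (M * s) + 2 * C * s * ((⌊x M⌋ : ℝ) - ⌊x 0⌋) := by
        simp only [← hx_succ]
        rw [← sum_range_sub (fun i => (⌊x i⌋ : ℝ)), mul_sum]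
        simp only [add_mul, sum_add_distrib, sum_const, card_range, nsmul_eq_mul]
        congr 1
        · ring
        · exact sum_congr rfl fun i _ => by ring
    _ ≤ ε * (M * s) + 2 * C * s * (M * s + 1) := by gcongr

theorem abs_mul_sum_comp_fract_sub_le (hg : Measurable g)
    (hC : ∀ x ∈ Set.Icc (0 : ℝ) 1, |g x| ≤ C)
    (huc : ∀ x ∈ Set.Icc (0 : ℝ) 1, ∀ y ∈ Set.Icc (0 : ℝ) 1, |x - y| ≤ s →
      |g x - g y| ≤ ε)
    (hs : 0 ≤ s) (c : ℝ) (M : ℕ) :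
    |s * ∑ i ∈ range M, g (Int.fract (c + i * s)) - M * s * ∫ x in (0 : ℝ)..1, g x|
      ≤ (ε + 2 * C * s) * (M * s) + 2 * C * (s + 1) := by
  refine (abs_sub_le _ (∫ u in c..c + M * s, g (Int.fract u)) _).trans ?_
  linarith [abs_mul_sum_comp_fract_sub_intervalIntegral_le hg hC huc hs c M,
    abs_intervalIntegral_comp_fract_sub_le hg hC c (M * s)]

end PeriodicExtension

section Averages

variable {ι : Type*} {l : Filter ι} {g : ℝ → ℝ} {c s : ι → ℝ} {M : ι → ℕ}

theorem tendsto_average_comp_fract_of_nonneg (hg : Continuous g) (hs0 : ∀ n, 0 ≤ s n)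
    (hs : Tendsto s l (𝓝 0)) (hMs : Tendsto (fun n => M n * s n) l atTop) :
    Tendsto (fun n => (M n : ℝ)⁻¹ * ∑ i ∈ range (M n), g (Int.fract (c n + i * s n))) l
      (𝓝 (∫ x in (0 : ℝ)..1, g x)) := by
  set I := ∫ x in (0 : ℝ)..1, g x
  obtain ⟨C, hC⟩ := (isCompact_Icc (a := (0 : ℝ)) (b := 1)).exists_bound_of_continuousOn
    hg.continuousOn
  simp only [Real.norm_eq_abs] at hC
  rw [Metric.tendsto_nhds]
  intro ε hε
  obtain ⟨δ, hδ, huc⟩ := Metric.uniformContinuousOn_iff_le.1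
    ((isCompact_Icc (a := (0 : ℝ)) (b := 1)).uniformContinuousOn_of_continuous hg.continuousOn)
    (ε / 2) (half_pos hε)
  have hrem : Tendsto (fun n => 2 * C * s n + 2 * C * (s n + 1) / (M n * s n)) l (𝓝 0) := by
    simpa using (hs.const_mul (2 * C)).add
      (((hs.add_const 1).const_mul (2 * C)).div_atTop hMs)
  filter_upwards [hs.eventually (ge_mem_nhds hδ), hrem.eventually (gt_mem_nhds (half_pos hε)),
    hMs.eventually_gt_atTop 0] with n hsδ hsmall hpos
  obtain ⟨hM, hsn⟩ : (M n : ℝ) ≠ 0 ∧ s n ≠ 0 := mul_ne_zero_iff.1 hpos.ne'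
  have huc' : ∀ x ∈ Set.Icc (0 : ℝ) 1, ∀ y ∈ Set.Icc (0 : ℝ) 1, |x - y| ≤ s n →
      |g x - g y| ≤ ε / 2 := fun x hx y hy hxy => by
    simpa only [Real.dist_eq] using huc x hx y hy (by rw [Real.dist_eq]; exact hxy.trans hsδ)
  have hsum := abs_mul_sum_comp_fract_sub_le hg.measurable hC huc' (hs0 n) (c n) (M n)
  set S := ∑ i ∈ range (M n), g (Int.fract (c n + i * s n))
  calc dist ((M n : ℝ)⁻¹ * S) I = |s n * S - M n * s n * I| / (M n * s n) := by
        rw [Real.dist_eq, ← abs_of_pos hpos, ← abs_div, abs_of_pos hpos]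
        congr 1
        field_simp
    _ ≤ ((ε / 2 + 2 * C * s n) * (M n * s n) + 2 * C * (s n + 1)) / (M n * s n) := by gcongr
    _ = ε / 2 + (2 * C * s n + 2 * C * (s n + 1) / (M n * s n)) := by field_simp; ring
    _ < ε := by linarith

theorem tendsto_average_comp_fract (hg : Continuous g) (hs : Tendsto s l (𝓝 0))
    (hMs : Tendsto (fun n => M n * |s n|) l atTop) :
    Tendsto (fun n => (M n : ℝ)⁻¹ * ∑ i ∈ range (M n), g (Int.fract (c n + i * s n))) l
      (𝓝 (∫ x in (0 : ℝ)..1, g x)) := by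
  have hreflect : ∀ n, ∃ c' : ℝ, ∑ i ∈ range (M n), g (Int.fract (c n + i * s n)) =
      ∑ i ∈ range (M n), g (Int.fract (c' + i * |s n|)) := by
    intro n
    rcases le_total 0 (s n) with h | h
    · exact ⟨c n, by rw [abs_of_nonneg h]⟩
    · refine ⟨c n + (M n - 1) * s n, ?_⟩
      rw [← sum_range_reflect, abs_of_nonpos h]
      refine sum_congr rfl fun i hi => ?_
      rw [Nat.cast_sub (by simp at hi; omega), Nat.cast_sub (by simp at hi; omega)]
      push_cast
      ring_nf
  choose c' hc' using hreflect
  simpa only [hc'] using tendsto_average_comp_fract_of_nonneg hg (c := c')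
    (fun n => abs_nonneg (s n)) (by simpa using hs.abs) hMs

theorem tendsto_inv_mul_sum_comp_fract (hg : Continuous g) {a : ι → ℝ} {τ : ℝ}
    (hτ : 0 < τ) (hM : Tendsto (fun n => M n / a n) l (𝓝 τ)) (hs : Tendsto s l (𝓝 0))
    (has : Tendsto (fun n => a n * |s n|) l atTop) :
    Tendsto (fun n => (a n)⁻¹ * ∑ i ∈ range (M n), g (Int.fract (c n + i * s n))) l
      (𝓝 (τ * ∫ x in (0 : ℝ)..1, g x)) := by
  have ha : ∀ᶠ n in l, a n ≠ 0 := by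
    filter_upwards [has.eventually_gt_atTop 0] with n hn h
    simp [h] at hn
  have hMs : Tendsto (fun n => M n * |s n|) l atTop := by
    refine (Tendsto.pos_mul_atTop hτ hM has).congr' ?_
    filter_upwards [ha] with n hn
    field_simp
  have hM0 : ∀ᶠ n in l, (M n : ℝ) ≠ 0 := by
    filter_upwards [hMs.eventually_gt_atTop 0] with n hn h
    simp [h] at hn
  refine (hM.mul (tendsto_average_comp_fract hg (c := c) hs hMs)).congr' ?_
  filter_upwards [hM0] with n hn
  rw [div_mul_eq_mul_div, mul_inv_cancel_left₀ hn, div_eq_inv_mul]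

end Averages

def residueCount (q N r : ℕ) : ℕ := (N + q - 1 - r) / q

section ResidueCount

variable {q N r : ℕ}

theorem lt_residueCount_iff (hq : 0 < q) (hr : r < q) (i : ℕ) :
    i < residueCount q N r ↔ q * i + r < N := by
  rw [residueCount, ← Nat.add_one_le_iff, Nat.le_div_iff_mul_le hq, add_mul, one_mul, mul_comm]
  omega

theorem sum_range_eq_sum_residueCount {M : Type*} [AddCommMonoid M] (f : ℕ → M) (hq : 0 < q)
    (N : ℕ) : ∑ k ∈ range N, f k =
      ∑ r ∈ range q, ∑ i ∈ range (residueCount q N r), f (q * i + r) := by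
  rw [← sum_fiberwise_of_maps_to (g := (· % q)) fun k _ => mem_range.2 (Nat.mod_lt k hq)]
  refine sum_congr rfl fun r hr => ?_
  rw [mem_range] at hr
  have hdecomp : ∀ k, k % q = r → q * (k / q) + r = k := fun k hk => hk ▸ Nat.div_add_mod k q
  refine sum_nbij' (· / q) (q * · + r) (fun k hk => ?_) (fun i hi => ?_) (fun k hk => ?_)
    (fun i _ => ?_) (fun k hk => ?_)
  · simp only [mem_filter, mem_range] at hk ⊢
    rw [lt_residueCount_iff hq hr, hdecomp k hk.2]
    exact hk.1
  · simp only [mem_filter, mem_range] at hi ⊢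
    exact ⟨(lt_residueCount_iff hq hr i).1 hi, by rw [Nat.mul_add_mod, Nat.mod_eq_of_lt hr]⟩
  · simp only [mem_filter, mem_range] at hk ⊢
    exact hdecomp k hk.2
  · show (q * i + r) / q = i
    rw [Nat.mul_add_div hq, Nat.div_eq_of_lt hr, add_zero]
  · simp only [mem_filter, mem_range] at hk
    rw [hdecomp k hk.2]

theorem abs_mul_residueCount_sub_le (hq : 0 < q) (hr : r < q) :
    |(q * residueCount q N r : ℝ) - N| ≤ q := by
  have hlow : N ≤ q * residueCount q N r + q := by
    have := (lt_residueCount_iff (N := N) hq hr _).not.1 (lt_irrefl _)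
    omega
  have hup : q * residueCount q N r ≤ N + q := by
    rw [residueCount, mul_comm]
    exact (Nat.div_mul_le_self _ _).trans (by omega)
  have hlow' : (N : ℝ) ≤ q * residueCount q N r + q := by exact_mod_cast hlow
  have hup' : (q * residueCount q N r : ℝ) ≤ N + q := by exact_mod_cast hup
  rw [abs_sub_le_iff]
  constructor <;> linarith

theorem tendsto_residueCount_div {ι : Type*} {l : Filter ι} {N : ι → ℕ} {a : ι → ℝ}
    {t : ℝ} (hq : 0 < q) (hr : r < q) (ha : Tendsto a l atTop)
    (hN : Tendsto (fun n => N n / a n) l (𝓝 t)) :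
    Tendsto (fun n => residueCount q (N n) r / a n) l (𝓝 (t / q)) := by
  have hq' : (0 : ℝ) < q := by exact_mod_cast hq
  have herr :
      Tendsto (fun n => ((q * residueCount q (N n) r : ℝ) - N n) / (q * a n)) l (𝓝 0) := by
    refine squeeze_zero_norm' ?_
      ((tendsto_const_nhds (x := (q : ℝ))).div_atTop (ha.const_mul_atTop hq'))
    filter_upwards [ha.eventually_gt_atTop 0] with n hn
    rw [norm_div, Real.norm_of_nonneg (by positivity : 0 ≤ q * a n), Real.norm_eq_abs]
    exact div_le_div_of_nonneg_right (abs_mul_residueCount_sub_le hq hr) (by positivity)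
  refine (by simpa using (hN.div_const q).add herr : Tendsto _ l _).congr' ?_
  filter_upwards [ha.eventually_gt_atTop 0] with n hn
  field_simp
  ring

end ResidueCount

theorem continuous_fmL (L : ℝ) (m : ℤ) : Continuous (fmL L m) := by
  unfold fmL
  fun_prop (disch := norm_num)

theorem fract_mul_of_mul_eq_intCast {q : ℕ} {p : ℤ} {L : ℝ} (hqL : q * L = p) (i r : ℕ)
    (x : ℝ) :
    Int.fract ((1 + (q * i + r)) * x) = Int.fract ((r + 1) * x + i * (q * (x - L))) := by
  rw [← Int.fract_add_intCast ((r + 1) * x + i * (q * (x - L))) (i * p)]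
  congr 1
  push_cast
  linear_combination (i : ℝ) * hqL

theorem sum_Icc_comp_fract_mul_eq {q : ℕ} {p : ℤ} {L : ℝ} (hq : 0 < q) (hqL : q * L = p)
    (G : ℝ → ℝ) (x u : ℝ) :
    ∑ j ∈ Finset.Icc (1 : ℤ) ⌊x⌋, G (Int.fract (j * u)) =
      ∑ r ∈ range q, ∑ i ∈ range (residueCount q ⌊x⌋₊ r),
        G (Int.fract ((r + 1) * u + i * (q * (u - L)))) := by
  rw [Int.Icc_eq_finset_map, sum_map, add_sub_cancel_right, Int.floor_toNat,
    sum_range_eq_sum_residueCount _ hq]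
  refine sum_congr rfl fun r _ => sum_congr rfl fun i _ => ?_
  simp only [Function.Embedding.trans_apply, Nat.castEmbedding_apply, addLeftEmbedding_apply]
  push_cast
  rw [fract_mul_of_mul_eq_intCast hqL]

theorem sum_tendsto_integral_atTop_case_general (a b : ℕ → ℕ) (ha : StrictMono a)
    (p q : ℕ) (hq : 0 < q)
    (L : ℝ) (hL : L = (p : ℝ) / (q : ℝ))
    (hconv : Tendsto (fun n => (b n : ℝ) / (a n : ℝ)) atTop (nhds L))
    (hinf : Tendsto (fun n => (a n : ℝ) * |(b n : ℝ) / (a n : ℝ) - L|) atTop atTop) :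
    ∀ (m : ℤ) (t : ℝ), 0 < t →
      Tendsto (fun n =>
        (1 / (a n : ℝ)) * ∑ j ∈ Finset.Icc (1 : ℤ) ⌊(a n : ℝ) * t⌋,
            fmLhat L m ((j : ℝ) * ((b n : ℝ) / (a n : ℝ))))
        atTop (nhds (t * ∫ x in (0 : ℝ)..1, fmL L m x)) := by
  intro m t ht
  have hq' : (0 : ℝ) < q := by exact_mod_cast hq
  have hqL : (q : ℝ) * L = (p : ℤ) := by rw [hL, Int.cast_natCast]; field_simp
  set u : ℕ → ℝ := fun n => (b n : ℝ) / a n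
  set s : ℕ → ℝ := fun n => q * (u n - L)
  have hatop : Tendsto (fun n => (a n : ℝ)) atTop atTop :=
    tendsto_natCast_atTop_atTop.comp ha.tendsto_atTop
  have hN : Tendsto (fun n => (⌊(a n : ℝ) * t⌋₊ : ℝ) / a n) atTop (𝓝 t) := by
    simpa only [Function.comp_def, mul_comm t] using
      (tendsto_nat_floor_mul_div_atTop ht.le).comp hatop
  have hs : Tendsto s atTop (𝓝 0) := by simpa using (hconv.sub_const L).const_mul (q : ℝ)
  have has : Tendsto (fun n => (a n : ℝ) * |s n|) atTop atTop :=
    (hinf.const_mul_atTop hq').congr fun n => by simp only [s, abs_mul, abs_of_pos hq']; ring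
  have hresidue : ∀ r ∈ range q, Tendsto (fun n => (a n : ℝ)⁻¹ *
      ∑ i ∈ range (residueCount q ⌊(a n : ℝ) * t⌋₊ r),
        fmL L m (Int.fract ((r + 1) * u n + i * s n)))
      atTop (𝓝 (t / q * ∫ x in (0 : ℝ)..1, fmL L m x)) := fun r hr =>
    tendsto_inv_mul_sum_comp_fract (continuous_fmL L m) (div_pos ht hq')
      (tendsto_residueCount_div hq (mem_range.1 hr) hatop hN) hs has
  have hsum := tendsto_finsetSum (range q) hresidue
  rw [sum_const, card_range, nsmul_eq_mul, ← mul_assoc, mul_div_cancel₀ _ hq'.ne'] at hsum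
  refine hsum.congr fun n => ?_
  rw [one_div, ← mul_sum]
  simp only [fmLhat]
  rw [sum_Icc_comp_fract_mul_eq hq hqL]

/-- If `L = p/q` in lowest terms, `L_n = b_n/a_n → L`, and `a_n|δ_n| → ∞`, then for every
`m ∈ ℤ` and `t > 0`, `(1/a_n) ∑_{j=1}^{⌊a_n t⌋} f̂_{m,L}(j L_n) → t ∫_0^1 f_{m,L}(x) dx`. -/
theorem sum_tendsto_integral_atTop_case (a b : ℕ → ℕ) (ha : StrictMono a) (hb : StrictMono b)
    (ha0 : ∀ n, 0 < a n) (hb0 : ∀ n, 0 < b n)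
    (p q : ℕ) (hp : 0 < p) (hq : 0 < q) (hpq : Nat.Coprime p q)
    (L : ℝ) (hL : L = (p : ℝ) / (q : ℝ))
    (hconv : Tendsto (fun n => (b n : ℝ) / (a n : ℝ)) atTop (nhds L))
    (hinf : Tendsto (fun n => (a n : ℝ) * |(b n : ℝ) / (a n : ℝ) - L|) atTop atTop) :
    ∀ (m : ℤ) (t : ℝ), 0 < t →
      Tendsto (fun n =>
        (1 / (a n : ℝ)) * ∑ j ∈ Finset.Icc (1 : ℤ) ⌊(a n : ℝ) * t⌋,
            fmLhat L m ((j : ℝ) * ((b n : ℝ) / (a n : ℝ))))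
        atTop (nhds (t * ∫ x in (0 : ℝ)..1, fmL L m x)) :=
  sum_tendsto_integral_atTop_case_general a b ha p q hq L hL hconv hinf
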